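/- For every α ∈ (0,1) and A > 0 there exists a constant R = R(α,A) > 0 such that for every integer N ≥ 1, every u ∈ [−2+α, 2−α], every t₁, t₂ ∈ [−A,A], and every H ∈ ℝ, one has | N^{−1}·K̃_N( (u+t₁/N)·d(H), (u+t₂/N)·d(H), 1/N ) | ≤ (N−1)!·( R·(1+H²) )^N. -/

import Mathlib

open Real

noncomputable section

/-- The monic (probabilists') Hermite polynomial, evaluated at a complex number. -/
def hermiteH (k : ℕ) (z : ℂ) : ℂ := Polynomial.aeval z (Polynomial.hermite k)

/-- The normalized Hermite polynomial `p_k = H_k / ((2π)^{1/4} (k!)^{1/2})`. -/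
def hermiteP (k : ℕ) (z : ℂ) : ℂ :=
  hermiteH k z / (((2 * π) ^ ((1:ℝ)/4) * Real.sqrt (Nat.factorial k) : ℝ) : ℂ)

/-- The Hermite function `φ_k(z) = p_k(z) exp(−z²/4)`. -/
def hermitePhi (k : ℕ) (z : ℂ) : ℂ := hermiteP k z * Complex.exp (-(z ^ 2) / 4)

/-- The Hermite reproducing kernel `K_N(z₁,z₂) = Σ_{k<N} φ_k(z₁) φ_k(z₂)`. -/
def kernelK (N : ℕ) (z₁ z₂ : ℂ) : ℂ :=
  ∑ k ∈ Finset.range N, hermitePhi k z₁ * hermitePhi k z₂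

/-- The rescaled kernel `K̃_N(z₁,z₂,s) = s^{−1/2} K_N(z₁ s^{−1/2}, z₂ s^{−1/2})`
(principal powers). -/
def kernelKt (N : ℕ) (z₁ z₂ s : ℂ) : ℂ :=
  s ^ (-(1:ℂ)/2) * kernelK N (z₁ * s ^ (-(1:ℂ)/2)) (z₂ * s ^ (-(1:ℂ)/2))

/-- `d(H) = √(1+iH)`, the principal square root. -/
def dC (H : ℝ) : ℂ := (1 + H * Complex.I) ^ ((1:ℂ)/2)

/-- The closed strip `S̄_{α,β} = {z : |Re z| ≤ 2−α, |Im z| ≤ β}`. -/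
def Sbar (α β : ℝ) : Set ℂ := {z : ℂ | |z.re| ≤ 2 - α ∧ |z.im| ≤ β}

/-- The Wigner semicircle density. -/
def wigner (x : ℝ) : ℝ := (2 * π)⁻¹ * Real.sqrt (4 - x ^ 2)

/-- The analytic continuation of the Wigner density,
`w(z) = (2π)⁻¹ (2−z)^{1/2} (2+z)^{1/2}` (principal powers). -/
def wignerC (z : ℂ) : ℂ :=
  (((2 * π)⁻¹ : ℝ) : ℂ) * ((2 - z) ^ ((1:ℂ)/2) * (2 + z) ^ ((1:ℂ)/2))


open Polynomial in
lemma derivative_hermite' (n : ℕ) :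
    Polynomial.derivative (Polynomial.hermite (n+1)) = (n+1 : ℤ) • Polynomial.hermite n := by
  induction n with
  | zero => simp [Polynomial.hermite_one, Polynomial.hermite_zero]
  | succ n ih =>
    rw [Polynomial.hermite_succ (n+1), Polynomial.derivative_sub, Polynomial.derivative_mul,
      Polynomial.derivative_X, one_mul, ih, Polynomial.derivative_smul, mul_smul_comm]
    have h2 : Polynomial.derivative (Polynomial.hermite n)
        = X * Polynomial.hermite n - Polynomial.hermite (n+1) := by
      rw [Polynomial.hermite_succ n]; ring
    rw [h2]
    push_cast
    module

lemma hermiteH_zero (z : ℂ) : hermiteH 0 z = 1 := by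
  rw [hermiteH, Polynomial.hermite_zero]; simp

lemma hermiteH_one (z : ℂ) : hermiteH 1 z = z := by
  rw [hermiteH, Polynomial.hermite_one]; simp

lemma hermiteH_rec (n : ℕ) (z : ℂ) :
    hermiteH (n+2) z = z * hermiteH (n+1) z - (n+1 : ℂ) * hermiteH n z := by
  have h : Polynomial.hermite (n+2) =
      Polynomial.X * Polynomial.hermite (n+1) - (n+1 : ℤ) • Polynomial.hermite n := by
    rw [Polynomial.hermite_succ (n+1), derivative_hermite' n]
  rw [hermiteH, hermiteH, hermiteH, h, map_sub, map_mul, Polynomial.aeval_X, map_zsmul,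
    zsmul_eq_mul]
  push_cast
  ring

lemma hermiteH_abs_le (z : ℂ) (n : ℕ) :
    ‖hermiteH n z‖ ≤
      Real.sqrt (Nat.factorial n) * (2 * max 1 (‖z‖)) ^ n := by
  set M : ℝ := max 1 (‖z‖) with hMdef
  have hM : 1 ≤ M := le_max_left _ _
  have hz : ‖z‖ ≤ M := le_max_right _ _
  have key : ∀ n : ℕ,
      ‖hermiteH n z‖ ≤ Real.sqrt (Nat.factorial n) * (2*M) ^ n ∧
      ‖hermiteH (n+1) z‖ ≤ Real.sqrt (Nat.factorial (n+1)) * (2*M) ^ (n+1) := by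
    intro n
    induction n with
    | zero =>
      constructor
      · rw [hermiteH_zero]
        norm_num
      · rw [hermiteH_one]
        have hle2 : ‖z‖ ≤ 2 * M := by linarith
        simpa using hle2
    | succ n ih =>
      refine ⟨ih.2, ?_⟩
      have hcast : ‖(n:ℂ)+1‖ = (n:ℝ)+1 := by
        rw [show ((n:ℂ)+1) = ((n+1 : ℝ) : ℂ) by push_cast; ring, Complex.norm_real, Real.norm_eq_abs,
          abs_of_nonneg (by positivity)]
      have h1 : ‖hermiteH (n+2) z‖ ≤
          M * (Real.sqrt (Nat.factorial (n+1)) * (2*M)^(n+1)) +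
            ((n:ℝ)+1) * (Real.sqrt (Nat.factorial n) * (2*M)^n) := by
        rw [hermiteH_rec]
        refine le_trans (norm_sub_le _ _) ?_
        rw [norm_mul, norm_mul, hcast]
        exact add_le_add
          (mul_le_mul hz ih.2 (norm_nonneg _) (by linarith))
          (mul_le_mul le_rfl ih.1 (norm_nonneg _) (by positivity))
      refine h1.trans ?_
      have hs1 : Real.sqrt ((Nat.factorial (n+1) : ℝ)) =
          Real.sqrt ((n:ℝ)+1) * Real.sqrt (Nat.factorial n) := by
        rw [← Real.sqrt_mul (by positivity)]
        congr 1
        rw [Nat.factorial_succ]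
        push_cast; ring
      have hs2 : Real.sqrt ((Nat.factorial (n+2) : ℝ)) =
          Real.sqrt ((n:ℝ)+2) * Real.sqrt (Nat.factorial (n+1)) := by
        rw [← Real.sqrt_mul (by positivity)]
        congr 1
        rw [Nat.factorial_succ (n+1)]
        push_cast; ring
      set a : ℝ := Real.sqrt (Nat.factorial n) with ha
      set s : ℝ := Real.sqrt ((n:ℝ)+1) with hss
      set t : ℝ := Real.sqrt ((n:ℝ)+2) with hts
      have ha0 : 0 ≤ a := Real.sqrt_nonneg _
      have hs0 : 0 ≤ s := Real.sqrt_nonneg _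
      have hes : s * s = (n:ℝ)+1 := Real.mul_self_sqrt (by positivity)
      have hle : s ≤ t := by rw [hss, hts]; gcongr; linarith
      have h2 : (1:ℝ) ≤ t := by
        rw [hts, show (1:ℝ) = Real.sqrt 1 by simp]; gcongr; linarith
      have hP : (0:ℝ) < (2*M)^n := by positivity
      rw [hs2, hs1, ← hes]
      have key2 : 2*M^2 + s ≤ 4*M^2*t := by
        have e1 : (0:ℝ) ≤ (2*M^2)*(t-1) := mul_nonneg (by positivity) (by linarith)
        have e2 : (0:ℝ) ≤ t*(2*M^2-1) := mul_nonneg (by linarith) (by nlinarith)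
        nlinarith
      have hmul := mul_le_mul_of_nonneg_left key2
        (show (0:ℝ) ≤ s * a * (2*M)^n by positivity)
      calc M * (s * a * (2*M)^(n+1)) + s*s * (a * (2*M)^n)
          = s * a * (2*M)^n * (2*M^2 + s) := by rw [pow_succ]; ring
        _ ≤ s * a * (2*M)^n * (4*M^2*t) := hmul
        _ = t * (s * a) * (2*M)^(n+2) := by rw [pow_succ, pow_succ]; ring
  exact (key n).1

lemma hermitePhi_abs_le (k : ℕ) (w : ℂ) (hw : 0 ≤ (w^2).re) :
    ‖hermitePhi k w‖ ≤ (2 * max 1 (‖w‖)) ^ k := by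
  have hfac : (0:ℝ) < Real.sqrt (Nat.factorial k) :=
    Real.sqrt_pos.2 (by exact_mod_cast Nat.factorial_pos k)
  have hc1 : (1:ℝ) ≤ (2*π) ^ ((1:ℝ)/4) :=
    Real.one_le_rpow (by nlinarith [Real.pi_gt_three]) (by norm_num)
  have hexp : ‖Complex.exp (-(w^2)/4)‖ ≤ 1 := by
    rw [Complex.norm_exp]
    have h4 : (-(w^2)/4 : ℂ) = (((-1/4 : ℝ)):ℂ) * w^2 := by push_cast; ring
    rw [h4, Complex.re_ofReal_mul]
    rw [Real.exp_le_one_iff]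
    nlinarith
  have hP : ‖hermiteP k w‖ ≤ (2 * max 1 (‖w‖)) ^ k := by
    rw [hermiteP, norm_div, Complex.norm_real, Real.norm_eq_abs,
      abs_of_pos (by positivity : (0:ℝ) < (2*π) ^ ((1:ℝ)/4) * Real.sqrt (Nat.factorial k))]
    rw [div_le_iff₀ (by positivity)]
    calc ‖hermiteH k w‖
        ≤ Real.sqrt (Nat.factorial k) * (2 * max 1 (‖w‖)) ^ k :=
          hermiteH_abs_le w k
      _ ≤ (2 * max 1 (‖w‖)) ^ k * ((2*π) ^ ((1:ℝ)/4) * Real.sqrt (Nat.factorial k)) := by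
          rw [mul_comm]
          have hpow : (0:ℝ) ≤ (2 * max 1 (‖w‖)) ^ k := by positivity
          have h := mul_le_mul_of_nonneg_left
            (mul_le_mul_of_nonneg_right hc1 hfac.le) hpow
          rw [one_mul] at h
          exact h
  calc ‖hermitePhi k w‖
      = ‖hermiteP k w‖ * ‖Complex.exp (-(w^2)/4)‖ := norm_mul _ _
    _ ≤ (2 * max 1 (‖w‖)) ^ k * 1 := by
        apply mul_le_mul hP hexp (norm_nonneg _) (by positivity)
    _ = _ := mul_one _

lemma kernelK_abs_le (N : ℕ) (w₁ w₂ : ℂ) (h₁ : 0 ≤ (w₁^2).re) (h₂ : 0 ≤ (w₂^2).re)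
    (Q : ℝ) (hQ : 1 ≤ Q)
    (hm : 4 * (max 1 (‖w₁‖) * max 1 (‖w₂‖)) ≤ Q) :
    ‖kernelK N w₁ w₂‖ ≤ N * Q ^ N := by
  have hterm : ∀ k ∈ Finset.range N,
      ‖hermitePhi k w₁ * hermitePhi k w₂‖ ≤ Q ^ N := by
    intro k hk
    rw [norm_mul]
    set m₁ := max 1 (‖w₁‖) with hm₁
    set m₂ := max 1 (‖w₂‖) with hm₂
    have h1le : (1:ℝ) ≤ m₁ := le_max_left _ _
    have h2le : (1:ℝ) ≤ m₂ := le_max_left _ _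
    calc ‖hermitePhi k w₁‖ * ‖hermitePhi k w₂‖
        ≤ (2*m₁)^k * (2*m₂)^k := by
          apply mul_le_mul (hermitePhi_abs_le k w₁ h₁) (hermitePhi_abs_le k w₂ h₂)
            (norm_nonneg _) (by positivity)
      _ = (4 * (m₁ * m₂))^k := by rw [← mul_pow]; ring_nf
      _ ≤ Q ^ k := by
          apply pow_le_pow_left₀ (by positivity) hm
      _ ≤ Q ^ N := pow_le_pow_right₀ (by linarith) (Finset.mem_range.1 hk).le
  calc ‖kernelK N w₁ w₂‖
      ≤ ∑ k ∈ Finset.range N, ‖hermitePhi k w₁ * hermitePhi k w₂‖ :=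
        norm_sum_le _ _
    _ ≤ ∑ _k ∈ Finset.range N, Q ^ N := Finset.sum_le_sum hterm
    _ = N * Q ^ N := by rw [Finset.sum_const, Finset.card_range, nsmul_eq_mul]

lemma cpow_inv_nat (N : ℕ) (hN : 1 ≤ N) :
    ((N:ℂ)⁻¹) ^ (-(1:ℂ)/2) = ((Real.sqrt N : ℝ) : ℂ) := by
  have hN0 : (0:ℝ) < N := by exact_mod_cast hN
  have h1 : ((N:ℂ)⁻¹) = (((N:ℝ)⁻¹ : ℝ) : ℂ) := by push_cast; ring
  have h2 : (-(1:ℂ)/2) = (((-(1/2) : ℝ)) : ℂ) := by push_cast; norm_num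
  rw [h1, h2, ← Complex.ofReal_cpow (by positivity)]
  congr 1
  rw [Real.inv_rpow hN0.le, ← Real.rpow_neg hN0.le, Real.sqrt_eq_rpow]
  norm_num

lemma dC_sq (H : ℝ) : dC H * dC H = 1 + H * Complex.I := by
  have hne : (1 : ℂ) + H * Complex.I ≠ 0 := by
    intro h
    have := congrArg Complex.re h
    simp at this
  rw [dC, ← Complex.cpow_add _ _ hne]
  norm_num

lemma dC_abs_sq (H : ℝ) : ‖dC H‖ ^ 2 ≤ 1 + H ^ 2 := by
  have h : ‖dC H‖ ^ 2 = ‖1 + H * Complex.I‖ := by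
    rw [sq, ← norm_mul, dC_sq]
  rw [h]
  have habs : ‖1 + H * Complex.I‖ = Real.sqrt (1 + H^2) := by
    rw [Complex.norm_def, Complex.normSq_apply]
    simp
    ring_nf
  rw [habs]
  have h2 : Real.sqrt (1+H^2) ≤ Real.sqrt ((1+H^2)^2) := Real.sqrt_le_sqrt (by nlinarith)
  rwa [Real.sqrt_sq (by positivity)] at h2

lemma re_sq_w (r cc H : ℝ) : ((((r:ℝ):ℂ) * dC H * ((cc:ℝ):ℂ))^2).re = r^2*cc^2 := by
  have h : (((r:ℝ):ℂ) * dC H * ((cc:ℝ):ℂ))^2 = (((r^2*cc^2 : ℝ)):ℂ) * (1 + H*Complex.I) := by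
    push_cast
    linear_combination ((r:ℂ))^2*((cc:ℂ))^2 * dC_sq H
  rw [h, Complex.re_ofReal_mul]
  simp

lemma factorial_trick (N : ℕ) (hN : 1 ≤ N) :
    (N:ℝ) * (N:ℝ)^N ≤ (Nat.factorial (N-1)) * (4*Real.exp 1)^N := by
  obtain ⟨m, rfl⟩ : ∃ m, N = m+1 := ⟨N-1, (Nat.succ_pred_eq_of_pos hN).symm⟩
  simp only [Nat.add_sub_cancel]
  have h1 : ((m:ℝ)+1)^m ≤ (Nat.factorial m) * Real.exp ((m:ℝ)+1) := by
    have := Real.pow_div_factorial_le_exp (x := ((m:ℝ)+1)) (by positivity) m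
    rw [div_le_iff₀ (by positivity)] at this
    linarith [this]
  have h2 : ((m:ℝ)+1)^2 ≤ (4:ℝ)^(m+1) := by
    have hlt : (m+1 : ℕ) < 2^(m+1) := Nat.lt_two_pow_self
    have hle : ((m:ℝ)+1) ≤ (2:ℝ)^(m+1) := by exact_mod_cast hlt.le
    calc ((m:ℝ)+1)^2 ≤ ((2:ℝ)^(m+1))^2 := by
          apply pow_le_pow_left₀ (by positivity) hle
      _ = (4:ℝ)^(m+1) := by
          rw [← pow_mul, show (4:ℝ) = 2^2 by norm_num, ← pow_mul, Nat.mul_comm]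
  have h3 : Real.exp ((m:ℝ)+1) = Real.exp 1 ^ (m+1) := by
    rw [← Real.exp_nat_mul]
    norm_num
  have hpow : ((m:ℝ)+1) * ((m:ℝ)+1)^(m+1) = ((m:ℝ)+1)^m * ((m:ℝ)+1)^2 := by
    rw [← pow_succ', ← pow_add]
  push_cast
  rw [hpow]
  calc ((m:ℝ)+1)^m * ((m:ℝ)+1)^2
      ≤ ((Nat.factorial m) * Real.exp ((m:ℝ)+1)) * (4:ℝ)^(m+1) := by
        apply mul_le_mul h1 h2 (by positivity) (by positivity)
    _ = (Nat.factorial m) * (4*Real.exp 1)^(m+1) := by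
        rw [h3, mul_pow]; ring

theorem kernel_bound_global :
    ∀ α ∈ Set.Ioo (0:ℝ) 1, ∀ A : ℝ, 0 < A → ∃ R : ℝ, 0 < R ∧
      ∀ N : ℕ, 1 ≤ N → ∀ u ∈ Set.Icc (-2 + α) (2 - α),
        ∀ t₁ ∈ Set.Icc (-A) A, ∀ t₂ ∈ Set.Icc (-A) A, ∀ H : ℝ,
          ‖(N : ℂ)⁻¹ *
              kernelKt N (((u + t₁ / N : ℝ) : ℂ) * dC H)
                (((u + t₂ / N : ℝ) : ℂ) * dC H) ((N : ℂ)⁻¹)‖ ≤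
            (Nat.factorial (N - 1)) * (R * (1 + H ^ 2)) ^ N := by
  rintro α ⟨hα0, hα1⟩ A hA
  set B : ℝ := 2 + A with hB
  clear_value B
  have hB2 : (2:ℝ) ≤ B := by linarith
  refine ⟨16 * Real.exp 1 * (1 + B^2), by positivity, ?_⟩
  intro N hN u hu t₁ ht₁ t₂ ht₂ H
  have hN0 : (0:ℝ) < N := by exact_mod_cast hN
  have hN1 : (1:ℝ) ≤ N := by exact_mod_cast hN
  set c : ℝ := Real.sqrt N with hc
  clear_value c
  have hc0 : 0 ≤ c := by rw [hc]; exact Real.sqrt_nonneg _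
  have hc2 : c^2 = N := by rw [hc]; exact Real.sq_sqrt hN0.le
  have hcN : c ≤ N := by
    rw [hc]
    calc Real.sqrt N ≤ Real.sqrt ((N:ℝ)^2) := Real.sqrt_le_sqrt (by nlinarith [hN1])
      _ = N := Real.sqrt_sq hN0.le
  -- bounds on r_i
  have hr : ∀ t ∈ Set.Icc (-A) A, |u + t/(N:ℝ)| ≤ B := by
    rintro t ⟨h1, h2⟩
    have hu1 : |u| ≤ 2 := by
      rw [abs_le]; obtain ⟨hu1, hu2⟩ := hu; constructor <;> linarith
    have ht' : |t/(N:ℝ)| ≤ A := by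
      rw [abs_div, abs_of_pos hN0, div_le_iff₀ hN0]
      have htA : |t| ≤ A := abs_le.2 ⟨h1, h2⟩
      nlinarith [abs_nonneg t]
    calc |u + t/(N:ℝ)| ≤ |u| + |t/(N:ℝ)| := abs_add_le _ _
      _ ≤ B := by rw [hB]; linarith
  set r₁ : ℝ := u + t₁/(N:ℝ) with hr₁
  set r₂ : ℝ := u + t₂/(N:ℝ) with hr₂
  have hrb₁ : |r₁| ≤ B := hr t₁ ht₁
  have hrb₂ : |r₂| ≤ B := hr t₂ ht₂
  set w₁ : ℂ := ((r₁:ℝ):ℂ) * dC H * ((c:ℝ):ℂ) with hw₁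
  set w₂ : ℂ := ((r₂:ℝ):ℂ) * dC H * ((c:ℝ):ℂ) with hw₂
  clear_value r₁ r₂ w₁ w₂
  have hre₁ : 0 ≤ (w₁^2).re := by rw [hw₁, re_sq_w]; positivity
  have hre₂ : 0 ≤ (w₂^2).re := by rw [hw₂, re_sq_w]; positivity
  -- abs bounds
  have habsw : ∀ r : ℝ, |r| ≤ B →
      (‖((r:ℝ):ℂ) * dC H * ((c:ℝ):ℂ)‖)^2 ≤ B^2 * N * (1+H^2) := by
    intro r hrB
    have he : ‖((r:ℝ):ℂ) * dC H * ((c:ℝ):ℂ)‖ = |r| * ‖dC H‖ * c := by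
      rw [norm_mul, norm_mul, Complex.norm_real, Real.norm_eq_abs, Complex.norm_real, Real.norm_eq_abs, abs_of_nonneg hc0]
    rw [he]
    have hd := dC_abs_sq H
    have hd0 : 0 ≤ ‖dC H‖ := norm_nonneg _
    have h0r : 0 ≤ |r| := abs_nonneg r
    have h1 : |r|^2 ≤ B^2 := by nlinarith
    have h2 : |r|^2 * ‖dC H‖^2 ≤ B^2*(1+H^2) :=
      mul_le_mul h1 hd (sq_nonneg _) (by positivity)
    have h3 := mul_le_mul_of_nonneg_right h2 hN0.le
    calc (|r| * ‖dC H‖ * c)^2 = (|r|^2 * ‖dC H‖^2) * c^2 := by ring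
      _ = (|r|^2 * ‖dC H‖^2) * N := by rw [hc2]
      _ ≤ (B^2*(1+H^2)) * N := h3
      _ = B^2 * N * (1+H^2) := by ring
  set D : ℝ := (1+B^2) * (N:ℝ) * (1+H^2) with hD
  clear_value D
  have hD1 : 1 ≤ D := by
    rw [hD]
    have e1 : (1:ℝ) ≤ (1+B^2)*N := by nlinarith [mul_nonneg (sq_nonneg B) hN0.le]
    calc (1:ℝ) ≤ (1+B^2)*N := e1
      _ = (1+B^2)*N*1 := by ring
      _ ≤ (1+B^2)*N*(1+H^2) := by
          apply mul_le_mul_of_nonneg_left (by nlinarith [sq_nonneg H]) (by positivity)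
  have hmD : ∀ r : ℝ, |r| ≤ B →
      (max 1 (‖((r:ℝ):ℂ) * dC H * ((c:ℝ):ℂ)‖))^2 ≤ D := by
    intro r hrB
    rcases le_total (‖((r:ℝ):ℂ) * dC H * ((c:ℝ):ℂ)‖) 1 with h | h
    · rw [max_eq_left h]; simpa using hD1
    · rw [max_eq_right h]
      refine (habsw r hrB).trans ?_
      rw [hD]
      exact mul_le_mul_of_nonneg_right
        (mul_le_mul_of_nonneg_right (by linarith : B^2 ≤ 1+B^2) hN0.le) (by positivity)
  set Q : ℝ := 4 * D with hQ
  clear_value Q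
  have hQ1 : 1 ≤ Q := by rw [hQ]; linarith
  have hmQ : 4 * (max 1 (‖w₁‖) * max 1 (‖w₂‖)) ≤ Q := by
    have h₁ := hmD r₁ hrb₁
    have h₂ := hmD r₂ hrb₂
    rw [← hw₁] at h₁
    rw [← hw₂] at h₂
    have hm10 : 0 ≤ max 1 (‖w₁‖) := le_trans zero_le_one (le_max_left _ _)
    have hm20 : 0 ≤ max 1 (‖w₂‖) := le_trans zero_le_one (le_max_left _ _)
    rw [hQ]
    nlinarith [sq_nonneg (max 1 (‖w₁‖) - max 1 (‖w₂‖))]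
  have hK := kernelK_abs_le N w₁ w₂ hre₁ hre₂ Q hQ1 hmQ
  -- rewrite the expression
  have hcp := cpow_inv_nat N hN
  have hexpr : (N : ℂ)⁻¹ * kernelKt N (((r₁:ℝ):ℂ) * dC H) (((r₂:ℝ):ℂ) * dC H) ((N:ℂ)⁻¹)
      = (N : ℂ)⁻¹ * (((c:ℝ):ℂ) * kernelK N w₁ w₂) := by
    rw [kernelKt, hcp, ← hc, ← hw₁, ← hw₂]
  rw [hexpr, norm_mul, norm_mul, norm_inv, Complex.norm_natCast, Complex.norm_real, Real.norm_eq_abs,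
    abs_of_nonneg hc0]
  have step1 : ((N:ℝ))⁻¹ * (c * ‖kernelK N w₁ w₂‖) ≤ c * Q^N := by
    rw [inv_mul_le_iff₀ hN0]
    calc c * ‖kernelK N w₁ w₂‖ ≤ c * ((N:ℝ) * Q^N) := by
          apply mul_le_mul_of_nonneg_left hK hc0
      _ = (N:ℝ) * (c * Q^N) := by ring
  refine step1.trans ?_
  have step2 : c * Q^N ≤ (N:ℝ) * Q^N := by
    apply mul_le_mul_of_nonneg_right hcN (by positivity)
  refine step2.trans ?_
  -- final numeric step
  have hQe : Q = (4*(1+B^2)*(1+H^2)) * (N:ℝ) := by rw [hQ, hD]; ring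
  have hCpos : (0:ℝ) ≤ 4*(1+B^2)*(1+H^2) := by positivity
  calc (N:ℝ) * Q^N = (4*(1+B^2)*(1+H^2))^N * ((N:ℝ) * (N:ℝ)^N) := by
        rw [hQe, mul_pow]; ring
    _ ≤ (4*(1+B^2)*(1+H^2))^N * ((Nat.factorial (N-1)) * (4*Real.exp 1)^N) := by
        apply mul_le_mul_of_nonneg_left (factorial_trick N hN) (by positivity)
    _ = (Nat.factorial (N-1)) * ((16 * Real.exp 1 * (1 + B^2)) * (1+H^2))^N := by
        have hsplit : ((16 * Real.exp 1 * (1 + B^2)) * (1+H^2))^N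
            = (4*(1+B^2)*(1+H^2))^N * (4*Real.exp 1)^N := by
          rw [← mul_pow]
          congr 1
          ring
        rw [hsplit]
        ring
end
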